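/- arXiv:0906.0617 — 2 statements merged into one kernel-verified Lean document; each statement's English description precedes it below -/
import Mathlib

section
/- Let E be a normed vector space, E' a Banach space, ε > 0, p < 0. If f : E → E' satisfies ‖f(x+y) − f(x) − f(y)‖ ≤ ε(‖x‖^p + ‖y‖^p) for all nonzero x, y ∈ E, then there exists a unique additive mapping T : E → E' such that ‖f(x) − T(x)‖ ≤ (2ε/(2 − 2^p))·‖x‖^p for all nonzero x ∈ E. -/
/-!
Hyers's direct method. Put `g_n(x) = 2⁻ⁿ f(2ⁿ x)`. Applying the hypothesis at `(2ⁿx, 2ⁿx)` shows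
`‖g_{n+1}(x) - g_n(x)‖ ≤ ε ‖x‖ᵖ rⁿ` with `r = 2ᵖ / 2 < 1`, so `g_n(x)` converges to some `T x`, and
summing the geometric series gives `‖f x - T x‖ ≤ ε ‖x‖ᵖ / (1 - r) = 2ε / (2 - 2ᵖ) ‖x‖ᵖ`. At `(2ⁿx, 2ⁿy)`
the hypothesis bounds the Cauchy defect of `g_n` by `ε (‖x‖ᵖ + ‖y‖ᵖ) rⁿ → 0`, so `T` is additive
(`T 0 = 0` handles the zero arguments). If two additive maps are both within `C ‖x‖ᵖ` of `f`, their
difference `A` satisfies `m ‖A x‖ = ‖A (m • x)‖ ≤ 2C mᵖ ‖x‖ᵖ`, which forces `A x = 0` since `p < 1`.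
-/

open Filter Topology

section

variable {E E' : Type*} [NormedAddCommGroup E] [NormedSpace ℝ E]
  [NormedAddCommGroup E'] [NormedSpace ℝ E']

theorem AddMonoidHom.eq_zero_of_norm_le_mul_rpow (A : E →+ E') {C p : ℝ} (hp : p < 1)
    (hA : ∀ x, x ≠ 0 → ‖A x‖ ≤ C * ‖x‖ ^ p) : A = 0 := by
  ext x
  rcases eq_or_ne x 0 with rfl | hx
  · exact map_zero A
  have hbound : ∀ m : ℕ, 1 ≤ m → ‖A x‖ ≤ C * ‖x‖ ^ p * (m : ℝ) ^ (p - 1) := by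
    intro m hm
    have hm0 : (0 : ℝ) < m := by exact_mod_cast hm
    have hmx : m • x ≠ 0 := by
      rw [← Nat.cast_smul_eq_nsmul ℝ]
      exact smul_ne_zero hm0.ne' hx
    have h := hA (m • x) hmx
    rw [map_nsmul, RCLike.norm_nsmul ℝ, RCLike.norm_nsmul ℝ, nsmul_eq_mul, nsmul_eq_mul,
      Real.mul_rpow hm0.le (norm_nonneg x)] at h
    rw [Real.rpow_sub_one hm0.ne', ← mul_le_mul_iff_right₀ hm0]
    calc (m : ℝ) * ‖A x‖ ≤ C * ((m : ℝ) ^ p * ‖x‖ ^ p) := h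
      _ = (m : ℝ) * (C * ‖x‖ ^ p * ((m : ℝ) ^ p / m)) := by field_simp
  have hlim : Tendsto (fun m : ℕ => C * ‖x‖ ^ p * (m : ℝ) ^ (p - 1)) atTop (𝓝 0) := by
    have h := (tendsto_rpow_neg_atTop (sub_pos.2 hp)).comp tendsto_natCast_atTop_atTop
    simpa using h.const_mul (C * ‖x‖ ^ p)
  exact norm_le_zero_iff.1 (ge_of_tendsto hlim (eventually_atTop.2 ⟨1, hbound⟩))

theorem AddMonoidHom.eq_of_norm_sub_le_mul_rpow {A B : E →+ E'} {f : E → E'} {C p : ℝ}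
    (hp : p < 1) (hA : ∀ x, x ≠ 0 → ‖f x - A x‖ ≤ C * ‖x‖ ^ p)
    (hB : ∀ x, x ≠ 0 → ‖f x - B x‖ ≤ C * ‖x‖ ^ p) : A = B := by
  refine sub_eq_zero.1 ((A - B).eq_zero_of_norm_le_mul_rpow (C := 2 * C) hp fun x hx => ?_)
  calc ‖A x - B x‖ = ‖(f x - B x) - (f x - A x)‖ := by abel_nf
    _ ≤ ‖f x - B x‖ + ‖f x - A x‖ := norm_sub_le _ _
    _ ≤ C * ‖x‖ ^ p + C * ‖x‖ ^ p := add_le_add (hB x hx) (hA x hx)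
    _ = 2 * C * ‖x‖ ^ p := by ring

theorem two_inv_pow_mul_norm_two_pow_smul_rpow (x : E) (p : ℝ) (n : ℕ) :
    (2⁻¹ : ℝ) ^ n * ‖(2 : ℝ) ^ n • x‖ ^ p = ‖x‖ ^ p * ((2 : ℝ) ^ p / 2) ^ n := by
  rw [norm_smul, Real.norm_of_nonneg (by positivity), Real.mul_rpow (by positivity) (norm_nonneg x),
    ← Real.rpow_pow_comm zero_le_two, div_eq_mul_inv, mul_pow]
  ring

theorem two_rpow_div_two_lt_one {p : ℝ} (hp : p < 1) : (2 : ℝ) ^ p / 2 < 1 := by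
  rw [div_lt_one two_pos]
  simpa using Real.rpow_lt_rpow_of_exponent_lt one_lt_two hp

noncomputable def hyersSeq (f : E → E') (x : E) (n : ℕ) : E' := (2⁻¹ : ℝ) ^ n • f ((2 : ℝ) ^ n • x)

theorem hyersSeq_zero_right (f : E → E') (x : E) : hyersSeq f x 0 = f x := by
  simp [hyersSeq]

theorem hyersSeq_succ (f : E → E') (x : E) (n : ℕ) :
    hyersSeq f x (n + 1) = (2⁻¹ : ℝ) • hyersSeq f (x + x) n := by
  rw [hyersSeq, hyersSeq, smul_smul, ← pow_succ', ← two_smul ℝ x, smul_smul, ← pow_succ]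

theorem tendsto_hyersSeq_zero (f : E → E') : Tendsto (hyersSeq f 0) atTop (𝓝 0) := by
  have h := (tendsto_pow_atTop_nhds_zero_of_lt_one (by norm_num : (0 : ℝ) ≤ 2⁻¹)
    (by norm_num)).smul_const (f 0)
  rw [zero_smul] at h
  exact h.congr fun n => by rw [hyersSeq, smul_zero]

theorem hyersSeq_add_sub (f : E → E') (x y : E) (n : ℕ) :
    hyersSeq f (x + y) n - hyersSeq f x n - hyersSeq f y n =
      (2⁻¹ : ℝ) ^ n • (f ((2 : ℝ) ^ n • x + (2 : ℝ) ^ n • y) - f ((2 : ℝ) ^ n • x) -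
        f ((2 : ℝ) ^ n • y)) := by
  simp only [hyersSeq, smul_add, smul_sub]

def HasRassiasBound (f : E → E') (ε p : ℝ) : Prop :=
  ∀ x y : E, x ≠ 0 → y ≠ 0 → ‖f (x + y) - f x - f y‖ ≤ ε * (‖x‖ ^ p + ‖y‖ ^ p)

variable {f : E → E'} {ε p : ℝ}

theorem norm_hyersSeq_add_sub_le
    (hf : HasRassiasBound f ε p)
    {x y : E} (hx : x ≠ 0) (hy : y ≠ 0) (n : ℕ) :
    ‖hyersSeq f (x + y) n - hyersSeq f x n - hyersSeq f y n‖ ≤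
      ε * (‖x‖ ^ p + ‖y‖ ^ p) * ((2 : ℝ) ^ p / 2) ^ n := by
  have h2n : (2 : ℝ) ^ n ≠ 0 := by positivity
  rw [hyersSeq_add_sub, norm_smul, Real.norm_of_nonneg (by positivity)]
  calc (2⁻¹ : ℝ) ^ n * ‖f ((2 : ℝ) ^ n • x + (2 : ℝ) ^ n • y) - f ((2 : ℝ) ^ n • x) -
        f ((2 : ℝ) ^ n • y)‖
      ≤ (2⁻¹ : ℝ) ^ n * (ε * (‖(2 : ℝ) ^ n • x‖ ^ p + ‖(2 : ℝ) ^ n • y‖ ^ p)) := by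
        gcongr
        exact hf _ _ (smul_ne_zero h2n hx) (smul_ne_zero h2n hy)
    _ = ε * (‖x‖ ^ p + ‖y‖ ^ p) * ((2 : ℝ) ^ p / 2) ^ n := by
        rw [mul_left_comm, mul_add, two_inv_pow_mul_norm_two_pow_smul_rpow,
          two_inv_pow_mul_norm_two_pow_smul_rpow]
        ring

theorem dist_hyersSeq_succ_le
    (hf : HasRassiasBound f ε p)
    {x : E} (hx : x ≠ 0) (n : ℕ) :
    dist (hyersSeq f x n) (hyersSeq f x (n + 1)) ≤ ε * ‖x‖ ^ p * ((2 : ℝ) ^ p / 2) ^ n := by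
  have h : hyersSeq f x (n + 1) - hyersSeq f x n =
      (2⁻¹ : ℝ) • (hyersSeq f (x + x) n - hyersSeq f x n - hyersSeq f x n) := by
    rw [hyersSeq_succ]
    module
  rw [dist_comm, dist_eq_norm, h, norm_smul, Real.norm_of_nonneg (by norm_num)]
  calc (2⁻¹ : ℝ) * ‖hyersSeq f (x + x) n - hyersSeq f x n - hyersSeq f x n‖
      ≤ 2⁻¹ * (ε * (‖x‖ ^ p + ‖x‖ ^ p) * ((2 : ℝ) ^ p / 2) ^ n) := by
        gcongr
        exact norm_hyersSeq_add_sub_le hf hx hx n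
    _ = ε * ‖x‖ ^ p * ((2 : ℝ) ^ p / 2) ^ n := by ring

theorem cauchySeq_hyersSeq (hp : p < 1)
    (hf : HasRassiasBound f ε p)
    (x : E) : CauchySeq (hyersSeq f x) := by
  rcases eq_or_ne x 0 with rfl | hx
  · exact (tendsto_hyersSeq_zero f).cauchySeq
  · exact cauchySeq_of_le_geometric _ _ (two_rpow_div_two_lt_one hp) (dist_hyersSeq_succ_le hf hx)

noncomputable def hyersLimit (f : E → E') (x : E) : E' := limUnder atTop (hyersSeq f x)

theorem hyersLimit_zero (f : E → E') : hyersLimit f 0 = 0 :=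
  (tendsto_hyersSeq_zero f).limUnder_eq

variable [CompleteSpace E']

theorem norm_sub_hyersLimit_le (hp : p < 1)
    (hf : HasRassiasBound f ε p)
    {x : E} (hx : x ≠ 0) : ‖f x - hyersLimit f x‖ ≤ 2 * ε / (2 - (2 : ℝ) ^ p) * ‖x‖ ^ p := by
  have h := dist_le_of_le_geometric_of_tendsto₀ _ _ (two_rpow_div_two_lt_one hp)
    (dist_hyersSeq_succ_le hf hx) (cauchySeq_hyersSeq hp hf x).tendsto_limUnder
  have h2p : 0 < 2 - (2 : ℝ) ^ p := by linarith [two_rpow_div_two_lt_one hp]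
  rw [hyersSeq_zero_right, dist_eq_norm] at h
  calc ‖f x - hyersLimit f x‖ ≤ ε * ‖x‖ ^ p / (1 - (2 : ℝ) ^ p / 2) := h
    _ = 2 * ε / (2 - (2 : ℝ) ^ p) * ‖x‖ ^ p := by field_simp

theorem hyersLimit_add (hp : p < 1)
    (hf : HasRassiasBound f ε p)
    (x y : E) : hyersLimit f (x + y) = hyersLimit f x + hyersLimit f y := by
  rcases eq_or_ne x 0 with rfl | hx
  · rw [zero_add, hyersLimit_zero, zero_add]
  rcases eq_or_ne y 0 with rfl | hy
  · rw [add_zero, hyersLimit_zero, add_zero]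
  have hlim (z : E) : Tendsto (hyersSeq f z) atTop (𝓝 (hyersLimit f z)) :=
    (cauchySeq_hyersSeq hp hf z).tendsto_limUnder
  have hdefect : Tendsto (fun n => hyersSeq f (x + y) n - hyersSeq f x n - hyersSeq f y n)
      atTop (𝓝 0) := by
    refine squeeze_zero_norm (norm_hyersSeq_add_sub_le hf hx hy) ?_
    simpa using (tendsto_pow_atTop_nhds_zero_of_lt_one (by positivity)
      (two_rpow_div_two_lt_one hp)).const_mul (ε * (‖x‖ ^ p + ‖y‖ ^ p))
  have h := tendsto_nhds_unique (((hlim _).sub (hlim x)).sub (hlim y)) hdefect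
  rwa [sub_sub, sub_eq_zero] at h

end

theorem rassias_stability_neg_general {E E' : Type*}
    [NormedAddCommGroup E] [NormedSpace ℝ E]
    [NormedAddCommGroup E'] [NormedSpace ℝ E'] [CompleteSpace E']
    (f : E → E') (ε p : ℝ) (hp : p < 0)
    (hf : ∀ x y : E, x ≠ 0 → y ≠ 0 →
      ‖f (x + y) - f x - f y‖ ≤ ε * (‖x‖ ^ p + ‖y‖ ^ p)) :
    ∃! T : E → E',
      (∀ x y : E, T (x + y) = T x + T y) ∧
      (∀ x : E, x ≠ 0 → ‖f x - T x‖ ≤ (2 * ε / (2 - (2 : ℝ) ^ p)) * ‖x‖ ^ p) := by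
  have hp1 : p < 1 := hp.trans one_pos
  refine ⟨hyersLimit f, ⟨hyersLimit_add hp1 hf, fun x => norm_sub_hyersLimit_le hp1 hf⟩, ?_⟩
  rintro T ⟨hT_add, hT_near⟩
  exact congrArg DFunLike.coe <| AddMonoidHom.eq_of_norm_sub_le_mul_rpow
    (A := AddMonoidHom.mk' T hT_add) (B := AddMonoidHom.mk' _ (hyersLimit_add hp1 hf)) hp1
    hT_near fun x => norm_sub_hyersLimit_le hp1 hf

/-- Rassias's stability theorem for negative exponent `p < 0`, with the
functional inequality assumed only for nonzero vectors. -/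
theorem rassias_stability_neg {E E' : Type*}
    [NormedAddCommGroup E] [NormedSpace ℝ E]
    [NormedAddCommGroup E'] [NormedSpace ℝ E'] [CompleteSpace E']
    (f : E → E') (ε p : ℝ) (hε : 0 < ε) (hp : p < 0)
    (hf : ∀ x y : E, x ≠ 0 → y ≠ 0 →
      ‖f (x + y) - f x - f y‖ ≤ ε * (‖x‖ ^ p + ‖y‖ ^ p)) :
    ∃! T : E → E',
      (∀ x y : E, T (x + y) = T x + T y) ∧
      (∀ x : E, x ≠ 0 → ‖f x - T x‖ ≤ (2 * ε / (2 - (2 : ℝ) ^ p)) * ‖x‖ ^ p) :=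
  rassias_stability_neg_general f ε p hp hf
end

section
/- Let D : A → X be a limit D(x) = lim_{n→∞} f(3ⁿx)/3ⁿ where f : A → X satisfies ‖f([a,b,c]) − [f(a),b,c] − [a,f(b),c] − [a,b,f(c)]‖ ≤ φ(a,b,c) with lim_{n→∞} 3^{−n}·φ(3ⁿa, 3ⁿb, 3ⁿc) = 0 for all a,b,c, and where the ternary products are trilinear and bounded (‖[u,v,w]‖ ≤ ‖u‖‖v‖‖w‖). Then D satisfies D([x,y,z]) = [D(x),y,z] + [x,D(y),z] + [x,y,D(z)] for all x,y,z ∈ A. -/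
/-! With `r = 3ⁿ`, trilinearity identifies `r⁻³ f(r³[x,y,z])` with the Leibniz expression of the
rescaled map `r⁻¹ f(r ·)` at `(x, y, z)`, up to `r⁻³` times the defect of `f` at `(rx, ry, rz)`,
which is at most `r⁻¹ φ(rx, ry, rz) → 0`. Along the subsequence `3³ⁿ` the left side tends to
`D[x,y,z]`, and by continuity of the bounded module actions the right side tends to
`[Dx,y,z] + [x,Dy,z] + [x,y,Dz]`. -/

/-- A Banach ternary algebra `A` together with a ternary Banach `A`-module `X`:
a trilinear bounded ternary product on `A` and the three trilinear bounded
module actions of `A` on `X`. -/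
structure TernarySystem (A X : Type*)
    [NormedAddCommGroup A] [NormedSpace ℂ A]
    [NormedAddCommGroup X] [NormedSpace ℂ X] where
  tA : A → A → A → A
  m1 : X → A → A → X
  m2 : A → X → A → X
  m3 : A → A → X → X
  tA_lin1 : ∀ b c, IsLinearMap ℂ fun a => tA a b c
  tA_lin2 : ∀ a c, IsLinearMap ℂ fun b => tA a b c
  tA_lin3 : ∀ a b, IsLinearMap ℂ fun c => tA a b c
  m1_lin1 : ∀ b c, IsLinearMap ℂ fun u => m1 u b c
  m1_lin2 : ∀ u c, IsLinearMap ℂ fun b => m1 u b c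
  m1_lin3 : ∀ u b, IsLinearMap ℂ fun c => m1 u b c
  m2_lin1 : ∀ u c, IsLinearMap ℂ fun a => m2 a u c
  m2_lin2 : ∀ a c, IsLinearMap ℂ fun u => m2 a u c
  m2_lin3 : ∀ a u, IsLinearMap ℂ fun c => m2 a u c
  m3_lin1 : ∀ b u, IsLinearMap ℂ fun a => m3 a b u
  m3_lin2 : ∀ a u, IsLinearMap ℂ fun b => m3 a b u
  m3_lin3 : ∀ a b, IsLinearMap ℂ fun u => m3 a b u
  norm_tA : ∀ a b c, ‖tA a b c‖ ≤ ‖a‖ * ‖b‖ * ‖c‖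
  norm_m1 : ∀ u b c, ‖m1 u b c‖ ≤ ‖u‖ * ‖b‖ * ‖c‖
  norm_m2 : ∀ a u c, ‖m2 a u c‖ ≤ ‖a‖ * ‖u‖ * ‖c‖
  norm_m3 : ∀ a b u, ‖m3 a b u‖ ≤ ‖a‖ * ‖b‖ * ‖u‖

/-- A ternary derivation: a `ℂ`-linear map satisfying the ternary Leibniz rule. -/
def IsTernaryDerivation {A X : Type*}
    [NormedAddCommGroup A] [NormedSpace ℂ A]
    [NormedAddCommGroup X] [NormedSpace ℂ X]
    (S : TernarySystem A X) (D : A → X) : Prop :=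
  IsLinearMap ℂ D ∧
  ∀ x y z : A, D (S.tA x y z) = S.m1 (D x) y z + S.m2 x (D y) z + S.m3 x y (D z)

/-- A Jordan ternary derivation: a `ℂ`-linear map satisfying the Leibniz rule
on cubes. -/
def IsJordanTernaryDerivation {A X : Type*}
    [NormedAddCommGroup A] [NormedSpace ℂ A]
    [NormedAddCommGroup X] [NormedSpace ℂ X]
    (S : TernarySystem A X) (D : A → X) : Prop :=
  IsLinearMap ℂ D ∧
  ∀ x : A, D (S.tA x x x) = S.m1 (D x) x x + S.m2 x (D x) x + S.m3 x x (D x)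

section Trilinear

variable {R U V W Y : Type*} [CommSemiring R] [AddCommMonoid U] [AddCommMonoid V]
  [AddCommMonoid W] [AddCommMonoid Y] [Module R U] [Module R V] [Module R W] [Module R Y]

theorem map_smul_smul_smul_of_isLinearMap {T : U → V → W → Y}
    (h₁ : ∀ b c, IsLinearMap R fun a => T a b c) (h₂ : ∀ a c, IsLinearMap R fun b => T a b c)
    (h₃ : ∀ a b, IsLinearMap R fun c => T a b c) (r s t : R) (a : U) (b : V) (c : W) :
    T (r • a) (s • b) (t • c) = (r * s * t) • T a b c := by
  rw [(h₁ _ _).map_smul, (h₂ _ _).map_smul, (h₃ _ _).map_smul, smul_smul, smul_smul]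

end Trilinear

theorem continuous_of_isLinearMap_of_norm_le {R E F : Type*} [Semiring R]
    [SeminormedAddCommGroup E] [Module R E] [SeminormedAddCommGroup F] [Module R F] {T : E → F}
    (hT : IsLinearMap R T) (C : ℝ) (hC : ∀ x, ‖T x‖ ≤ C * ‖x‖) : Continuous T :=
  AddMonoidHomClass.continuous_of_bound (hT.mk' T) C hC

namespace TernarySystem

variable {A X : Type*} [NormedAddCommGroup A] [NormedSpace ℂ A]
  [NormedAddCommGroup X] [NormedSpace ℂ X] (S : TernarySystem A X)

def leibnizDefect (f : A → X) (a b c : A) : X :=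
  f (S.tA a b c) - S.m1 (f a) b c - S.m2 a (f b) c - S.m3 a b (f c)

theorem tA_smul (r s t : ℂ) (a b c : A) :
    S.tA (r • a) (s • b) (t • c) = (r * s * t) • S.tA a b c :=
  map_smul_smul_smul_of_isLinearMap S.tA_lin1 S.tA_lin2 S.tA_lin3 r s t a b c

theorem m1_smul (r s t : ℂ) (u : X) (b c : A) :
    S.m1 (r • u) (s • b) (t • c) = (r * s * t) • S.m1 u b c :=
  map_smul_smul_smul_of_isLinearMap S.m1_lin1 S.m1_lin2 S.m1_lin3 r s t u b c

theorem m2_smul (r s t : ℂ) (a : A) (u : X) (c : A) :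
    S.m2 (r • a) (s • u) (t • c) = (r * s * t) • S.m2 a u c :=
  map_smul_smul_smul_of_isLinearMap S.m2_lin1 S.m2_lin2 S.m2_lin3 r s t a u c

theorem m3_smul (r s t : ℂ) (a b : A) (u : X) :
    S.m3 (r • a) (s • b) (t • u) = (r * s * t) • S.m3 a b u :=
  map_smul_smul_smul_of_isLinearMap S.m3_lin1 S.m3_lin2 S.m3_lin3 r s t a b u

theorem continuous_m1_left (b c : A) : Continuous fun u => S.m1 u b c :=
  continuous_of_isLinearMap_of_norm_le (S.m1_lin1 b c) (‖b‖ * ‖c‖) fun u =>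
    (S.norm_m1 u b c).trans_eq (by ring)

theorem continuous_m2_middle (a c : A) : Continuous fun u => S.m2 a u c :=
  continuous_of_isLinearMap_of_norm_le (S.m2_lin2 a c) (‖a‖ * ‖c‖) fun u =>
    (S.norm_m2 a u c).trans_eq (by ring)

theorem continuous_m3_right (a b : A) : Continuous fun u => S.m3 a b u :=
  continuous_of_isLinearMap_of_norm_le (S.m3_lin3 a b) (‖a‖ * ‖b‖) fun u =>
    (S.norm_m3 a b u).trans_eq (by ring)

theorem cube_inv_smul_apply_tA_smul (f : A → X) {r : ℂ} (hr : r ≠ 0) (x y z : A) :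
    (r ^ 3)⁻¹ • f (r ^ 3 • S.tA x y z) =
      S.m1 (r⁻¹ • f (r • x)) y z + S.m2 x (r⁻¹ • f (r • y)) z + S.m3 x y (r⁻¹ • f (r • z)) +
        (r ^ 3)⁻¹ • S.leibnizDefect f (r • x) (r • y) (r • z) := by
  have h₁ := S.m1_smul r⁻¹ 1 1 (f (r • x)) y z
  have h₂ := S.m2_smul 1 r⁻¹ 1 x (f (r • y)) z
  have h₃ := S.m3_smul 1 1 r⁻¹ x y (f (r • z))
  have h₁' := S.m1_smul 1 r r (f (r • x)) y z
  have h₂' := S.m2_smul r 1 r x (f (r • y)) z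
  have h₃' := S.m3_smul r r 1 x y (f (r • z))
  simp only [one_smul] at h₁ h₂ h₃ h₁' h₂' h₃'
  rw [leibnizDefect, S.tA_smul, h₁, h₂, h₃, h₁', h₂', h₃', ← pow_three']
  match_scalars <;> field_simp <;> ring

open Filter Topology in
theorem tendsto_cube_inv_smul_leibnizDefect (f : A → X) (φ : A → A → A → ℝ)
    (hf : ∀ a b c, ‖S.leibnizDefect f a b c‖ ≤ φ a b c)
    (hvan : ∀ a b c : A,
      Tendsto (fun n : ℕ => ((3 : ℝ) ^ n)⁻¹ * φ ((3 : ℂ) ^ n • a) ((3 : ℂ) ^ n • b) ((3 : ℂ) ^ n • c))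
        atTop (𝓝 0))
    (x y z : A) :
    Tendsto (fun n : ℕ => (((3 : ℂ) ^ n) ^ 3)⁻¹ •
      S.leibnizDefect f ((3 : ℂ) ^ n • x) ((3 : ℂ) ^ n • y) ((3 : ℂ) ^ n • z)) atTop (𝓝 0) := by
  refine squeeze_zero_norm (fun n => ?_) (hvan x y z)
  have hpow : (3 : ℝ) ^ n ≤ ((3 : ℝ) ^ n) ^ 3 :=
    le_self_pow₀ (one_le_pow₀ (by norm_num)) (by norm_num)
  calc ‖(((3 : ℂ) ^ n) ^ 3)⁻¹ • S.leibnizDefect f ((3 : ℂ) ^ n • x) ((3 : ℂ) ^ n • y) ((3 : ℂ) ^ n • z)‖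
      = (((3 : ℝ) ^ n) ^ 3)⁻¹ *
          ‖S.leibnizDefect f ((3 : ℂ) ^ n • x) ((3 : ℂ) ^ n • y) ((3 : ℂ) ^ n • z)‖ := by
        simp [norm_smul]
    _ ≤ ((3 : ℝ) ^ n)⁻¹ * φ ((3 : ℂ) ^ n • x) ((3 : ℂ) ^ n • y) ((3 : ℂ) ^ n • z) := by
        gcongr
        exact hf _ _ _

end TernarySystem

open Filter Topology in
theorem limit_is_ternary_derivation_general {A X : Type*}
    [NormedAddCommGroup A] [NormedSpace ℂ A]
    [NormedAddCommGroup X] [NormedSpace ℂ X]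
    (S : TernarySystem A X)
    (f : A → X) (D : A → X) (φ : A → A → A → ℝ)
    (hf : ∀ a b c : A,
      ‖f (S.tA a b c) - S.m1 (f a) b c - S.m2 a (f b) c - S.m3 a b (f c)‖ ≤ φ a b c)
    (hvan : ∀ a b c : A,
      Filter.Tendsto (fun n : ℕ => ((3 : ℝ) ^ n)⁻¹ * φ ((3 : ℂ) ^ n • a) ((3 : ℂ) ^ n • b) ((3 : ℂ) ^ n • c))
        Filter.atTop (nhds 0))
    (hD : ∀ x : A,
      Filter.Tendsto (fun n : ℕ => ((3 : ℂ) ^ n)⁻¹ • f ((3 : ℂ) ^ n • x))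
        Filter.atTop (nhds (D x))) :
    ∀ x y z : A, D (S.tA x y z) = S.m1 (D x) y z + S.m2 x (D y) z + S.m3 x y (D z) := by
  intro x y z
  have hsub : Tendsto (fun n : ℕ => (((3 : ℂ) ^ n) ^ 3)⁻¹ • f (((3 : ℂ) ^ n) ^ 3 • S.tA x y z))
      atTop (𝓝 (D (S.tA x y z))) := by
    have h3n : StrictMono fun n : ℕ => 3 * n := fun a b h => by dsimp only; omega
    simpa only [Function.comp_def, pow_mul'] using (hD (S.tA x y z)).comp h3n.tendsto_atTop
  have hLeibniz : Tendsto (fun n : ℕ => (((3 : ℂ) ^ n) ^ 3)⁻¹ • f (((3 : ℂ) ^ n) ^ 3 • S.tA x y z))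
      atTop (𝓝 (S.m1 (D x) y z + S.m2 x (D y) z + S.m3 x y (D z))) := by
    simp_rw [S.cube_inv_smul_apply_tA_smul f (pow_ne_zero _ three_ne_zero)]
    simpa using ((((S.continuous_m1_left y z).tendsto _).comp (hD x)).add
      (((S.continuous_m2_middle x z).tendsto _).comp (hD y))).add
      (((S.continuous_m3_right x y).tendsto _).comp (hD z)) |>.add
      (S.tendsto_cube_inv_smul_leibnizDefect f φ hf hvan x y z)
  exact tendsto_nhds_unique hsub hLeibniz

/-- If `D(x) = lim f(3ⁿx)/3ⁿ` where `f` is an approximate ternary derivation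
with vanishing scaled control function, then `D` satisfies the exact ternary
Leibniz identity. -/
theorem limit_is_ternary_derivation {A X : Type*}
    [NormedAddCommGroup A] [NormedSpace ℂ A] [CompleteSpace A]
    [NormedAddCommGroup X] [NormedSpace ℂ X] [CompleteSpace X]
    (S : TernarySystem A X)
    (f : A → X) (D : A → X) (φ : A → A → A → ℝ)
    (hφ : ∀ a b c, 0 ≤ φ a b c)
    (hf : ∀ a b c : A,
      ‖f (S.tA a b c) - S.m1 (f a) b c - S.m2 a (f b) c - S.m3 a b (f c)‖ ≤ φ a b c)
    (hvan : ∀ a b c : A,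
      Filter.Tendsto (fun n : ℕ => ((3 : ℝ) ^ n)⁻¹ * φ ((3 : ℂ) ^ n • a) ((3 : ℂ) ^ n • b) ((3 : ℂ) ^ n • c))
        Filter.atTop (nhds 0))
    (hD : ∀ x : A,
      Filter.Tendsto (fun n : ℕ => ((3 : ℂ) ^ n)⁻¹ • f ((3 : ℂ) ^ n • x))
        Filter.atTop (nhds (D x))) :
    ∀ x y z : A, D (S.tA x y z) = S.m1 (D x) y z + S.m2 x (D y) z + S.m3 x y (D z) :=
  limit_is_ternary_derivation_general S f D φ hf hvan hD
end
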